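/- Incentive compatibility payoff comparison (core of Theorem 3): fix k ∈ {1,…,N}, constants c_0 > 0 and q > 0, and let U : ℝ₊ → ℝ₊ be a Borel measurable function that is nondecreasing on [0,q], satisfies U(y) ≤ R·y for all y ∈ [0,q], U(y) = U(q) for all y ≥ q, where R = U(q)/q, and suppose R ≥ c_0. Let a_k, …, a_N ≥ 0, define the partition events η_k = {ξ_k ≤ 0}, η_t = {ξ_k > 0, …, ξ_{t−1} > 0, ξ_t ≤ 0} for t = k+1, …, N−1, and η_N = {ξ_k > 0, …, ξ_{N−1} > 0}, and let W : Ω → ℝ₊ be a bounded random variable such that W ≤ Σ_{τ=k}^t a_τ almost surely on η_t for every t ∈ {k, …, N}. Then the expected surplus from the deviation is no larger than the truth-telling surplus: E[U(W)] − Σ_{t=k}^N ζ_t(x)·a_t ≤ U(q) − q·ζ_k(x). -/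

import Mathlib

open MeasureTheory

/-- The residual process: `ξ_0 = 0`, `ξ_{k+1} = max{0, ξ_k} + s_k - x_{k+1}`. -/
noncomputable def resid (x s : ℕ → ℝ) : ℕ → ℝ
  | 0 => 0
  | k + 1 => max 0 (resid x s k) + s k - x (k + 1)

/-- The events `η_k = {ξ_k ≤ 0}`, `η_t = {ξ_k > 0, …, ξ_{t-1} > 0, ξ_t ≤ 0}` for
`t = k+1, …, N-1`, and `η_N = {ξ_k > 0, …, ξ_{N-1} > 0}`. -/
def etaEvent (N : ℕ) {Ω : Type*} (x : ℕ → ℝ) (s : Ω → ℕ → ℝ) (k t : ℕ) : Set Ω :=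
  if t = N then {ω | ∀ j, k ≤ j → j < N → 0 < resid x (s ω) j}
  else {ω | (∀ j, k ≤ j → j < t → 0 < resid x (s ω) j) ∧ resid x (s ω) t ≤ 0}

/-- The marginal cost price menu
`ζ_k(x) = c_0 [ P(ξ_k ≤ 0) + Σ_{t=k+1}^N P(ξ_k > 0, …, ξ_{t-1} > 0, ξ_t ≤ 0) ]`. -/
noncomputable def zetaPrice (N : ℕ) {Ω : Type*} [MeasurableSpace Ω] (P : Measure Ω)
    (s : Ω → ℕ → ℝ) (c0 : ℝ) (x : ℕ → ℝ) (k : ℕ) : ℝ :=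
  c0 * ((P {ω | resid x (s ω) k ≤ 0}).toReal +
    ∑ t ∈ Finset.Icc (k + 1) N,
      (P {ω | (∀ j, k ≤ j → j < t → 0 < resid x (s ω) j) ∧
        resid x (s ω) t ≤ 0}).toReal)

/-!
Split the sample space along the cells `η_t` of the first time `t ≥ k` at which the residual is
nonpositive. The price `ζ_t` is `c_0` times the probability that the residual is nonpositive at
some time in `[t, N]` (its summands are the disjoint events of the first such time), and on
`η_t` this happens for every `t' ∈ [k, t]` as soon as it happens for `t' = k`. So, pointwise,
either the deviator pays nothing and `U(W) ≤ U(q)`, or she pays at least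
`c_0 Σ_{τ ≤ t} a_τ ≥ c_0 W`, and `U(W) ≤ R min(q, W)` with `R ≥ c_0` gives
`U(W) - c_0 W ≤ (R - c_0) q = U(q) - c_0 q`. Integrating this pointwise bound gives the theorem.
-/

section

variable {Ω : Type*}

lemma exists_first_of_le {p : ℕ → Prop} {t u₀ : ℕ} (ht : t ≤ u₀) (hp : p u₀) :
    ∃ u, t ≤ u ∧ u ≤ u₀ ∧ p u ∧ ∀ j, t ≤ j → j < u → ¬p j := by
  classical
  have h : ∃ u, t ≤ u ∧ p u := ⟨u₀, ht, hp⟩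
  obtain ⟨htu, hpu⟩ := Nat.find_spec h
  exact ⟨Nat.find h, htu, Nat.find_min' h ⟨ht, hp⟩, hpu,
    fun j htj hj hpj => Nat.find_min h hj ⟨htj, hpj⟩⟩

section HitEvents

variable (ξ : Ω → ℕ → ℝ)

def firstHitEvent (t u : ℕ) : Set Ω :=
  {ω | (∀ j, t ≤ j → j < u → 0 < ξ ω j) ∧ ξ ω u ≤ 0}

def hitEvent (t N : ℕ) : Set Ω :=
  {ω | ∃ u ∈ Finset.Icc t N, ξ ω u ≤ 0}

lemma hitEvent_eq_biUnion_firstHitEvent (t N : ℕ) :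
    hitEvent ξ t N = ⋃ u ∈ Finset.Icc t N, firstHitEvent ξ t u := by
  ext ω
  simp only [hitEvent, firstHitEvent, Set.mem_ofPred_eq, Set.mem_iUnion, Finset.mem_Icc,
    exists_prop]
  constructor
  · rintro ⟨u₀, ⟨htu₀, hu₀N⟩, hu₀⟩
    obtain ⟨u, htu, huu₀, hu, hfirst⟩ := exists_first_of_le (p := fun u => ξ ω u ≤ 0) htu₀ hu₀
    exact ⟨u, ⟨htu, huu₀.trans hu₀N⟩, fun j htj hju => not_le.mp (hfirst j htj hju), hu⟩
  · rintro ⟨u, hu, -, hξu⟩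
    exact ⟨u, hu, hξu⟩

lemma firstHitEvent_disjoint {t u v : ℕ} (htu : t ≤ u) (huv : u < v) :
    Disjoint (firstHitEvent ξ t u) (firstHitEvent ξ t v) :=
  Set.disjoint_left.mpr fun _ hu hv => (hv.1 u htu huv).not_ge hu.2

lemma pairwiseDisjoint_firstHitEvent (t : ℕ) :
    (Set.Ici t).PairwiseDisjoint (firstHitEvent ξ t) := by
  intro u hu v hv huv
  rcases huv.lt_or_gt with h | h
  · exact firstHitEvent_disjoint ξ hu h
  · exact (firstHitEvent_disjoint ξ hv h).symm

variable [MeasurableSpace Ω] {ξ}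

lemma measurableSet_firstHitEvent (hξ : ∀ j, Measurable fun ω => ξ ω j) (t u : ℕ) :
    MeasurableSet (firstHitEvent ξ t u) := by
  have h : firstHitEvent ξ t u =
      (⋂ j ∈ Finset.Ico t u, {ω | 0 < ξ ω j}) ∩ {ω | ξ ω u ≤ 0} := by
    ext ω
    simp [firstHitEvent]
  rw [h]
  exact (Finset.measurableSet_biInter _ fun j _ => measurableSet_lt measurable_const (hξ j)).inter
    (measurableSet_le (hξ u) measurable_const)

lemma measurableSet_hitEvent (hξ : ∀ j, Measurable fun ω => ξ ω j) (t N : ℕ) :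
    MeasurableSet (hitEvent ξ t N) := by
  rw [hitEvent_eq_biUnion_firstHitEvent]
  exact Finset.measurableSet_biUnion _ fun u _ => measurableSet_firstHitEvent hξ t u

lemma measureReal_hitEvent (μ : Measure Ω) [IsFiniteMeasure μ]
    (hξ : ∀ j, Measurable fun ω => ξ ω j) (t N : ℕ) :
    μ.real (hitEvent ξ t N) = ∑ u ∈ Finset.Icc t N, μ.real (firstHitEvent ξ t u) := by
  rw [hitEvent_eq_biUnion_firstHitEvent]
  exact measureReal_biUnion_finset
    ((pairwiseDisjoint_firstHitEvent ξ t).subset fun u hu => (Finset.mem_Icc.mp hu).1)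
    fun u _ => measurableSet_firstHitEvent hξ t u

end HitEvents

section SaturatingUtility

variable {U : ℝ → ℝ} {q R : ℝ}

lemma apply_le_mul_min (hUlin : ∀ y ∈ Set.Icc (0 : ℝ) q, U y ≤ R * y)
    (hUsat : ∀ y, q ≤ y → U y = U q) (hUq : U q = R * q) {y : ℝ} (hy : 0 ≤ y) :
    U y ≤ R * min q y := by
  rcases le_total y q with h | h
  · rw [min_eq_right h]
    exact hUlin y ⟨hy, h⟩
  · rw [min_eq_left h, hUsat y h, hUq]

lemma apply_le_apply_saturation (hUlin : ∀ y ∈ Set.Icc (0 : ℝ) q, U y ≤ R * y)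
    (hUsat : ∀ y, q ≤ y → U y = U q) (hUq : U q = R * q) (hR : 0 ≤ R) {y : ℝ} (hy : 0 ≤ y) :
    U y ≤ U q :=
  (apply_le_mul_min hUlin hUsat hUq hy).trans
    (hUq ▸ mul_le_mul_of_nonneg_left (min_le_left q y) hR)

end SaturatingUtility

lemma sub_mul_le_of_le_mul_min {u y A R c q : ℝ} (hu : u ≤ R * min q y) (hyA : y ≤ A)
    (hc : 0 ≤ c) (hcR : c ≤ R) : u - c * A ≤ (R - c) * q := by
  have hpay : c * min q y ≤ c * A := mul_le_mul_of_nonneg_left ((min_le_right q y).trans hyA) hc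
  have hcap : (R - c) * min q y ≤ (R - c) * q :=
    mul_le_mul_of_nonneg_left (min_le_left q y) (sub_nonneg.mpr hcR)
  linarith

section Residual

variable {x : ℕ → ℝ} {s : Ω → ℕ → ℝ} {N k t : ℕ} {ω : Ω}

lemma exists_mem_etaEvent (hkN : k ≤ N) (ω : Ω) :
    ∃ t ∈ Finset.Icc k N, ω ∈ etaEvent N x s k t := by
  by_cases h : ∃ u, k ≤ u ∧ u < N ∧ resid x (s ω) u ≤ 0
  · obtain ⟨u₀, hku₀, hu₀N, hu₀⟩ := h
    obtain ⟨t, hkt, htu₀, ht, hfirst⟩ :=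
      exists_first_of_le (p := fun u => resid x (s ω) u ≤ 0) hku₀ hu₀
    refine ⟨t, Finset.mem_Icc.mpr ⟨hkt, by omega⟩, ?_⟩
    rw [etaEvent, if_neg (by omega)]
    exact ⟨fun j hkj hjt => not_le.mp (hfirst j hkj hjt), ht⟩
  · push Not at h
    refine ⟨N, Finset.mem_Icc.mpr ⟨hkN, le_rfl⟩, ?_⟩
    rw [etaEvent, if_pos rfl]
    exact fun j hkj hjN => h j hkj hjN

lemma resid_nonpos_of_mem_etaEvent (hη : ω ∈ etaEvent N x s k t)
    (hE : ω ∈ hitEvent (fun ω => resid x (s ω)) k N) : resid x (s ω) t ≤ 0 := by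
  rw [etaEvent] at hη
  split_ifs at hη with htN
  · subst htN
    obtain ⟨u, hu, hξu⟩ := hE
    obtain ⟨hku, huN⟩ := Finset.mem_Icc.mp hu
    rcases huN.lt_or_eq with huN | rfl
    · exact absurd hξu (hη u hku huN).not_ge
    · exact hξu
  · exact hη.2

lemma sum_le_sum_indicator_hitEvent {b : ℕ → ℝ} (hb : ∀ τ ∈ Finset.Icc k N, 0 ≤ b τ)
    (htN : t ≤ N) (hη : ω ∈ etaEvent N x s k t)
    (hE : ω ∈ hitEvent (fun ω => resid x (s ω)) k N) :
    ∑ τ ∈ Finset.Icc k t, b τ ≤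
      ∑ τ ∈ Finset.Icc k N, (hitEvent (fun ω => resid x (s ω)) τ N).indicator (fun _ => b τ) ω := by
  have hmem : ∀ τ ∈ Finset.Icc k t, ω ∈ hitEvent (fun ω => resid x (s ω)) τ N := fun τ hτ =>
    ⟨t, Finset.mem_Icc.mpr ⟨(Finset.mem_Icc.mp hτ).2, htN⟩, resid_nonpos_of_mem_etaEvent hη hE⟩
  calc ∑ τ ∈ Finset.Icc k t, b τ
      = ∑ τ ∈ Finset.Icc k t,
          (hitEvent (fun ω => resid x (s ω)) τ N).indicator (fun _ => b τ) ω :=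
        Finset.sum_congr rfl fun τ hτ => (Set.indicator_of_mem (hmem τ hτ) (fun _ => b τ)).symm
    _ ≤ _ := Finset.sum_le_sum_of_subset_of_nonneg (Finset.Icc_subset_Icc_right htN)
        fun τ hτ _ => Set.indicator_nonneg (fun _ _ => hb τ hτ) ω

lemma measurable_resid [MeasurableSpace Ω] (hs : ∀ j, Measurable fun ω => s ω j) (j : ℕ) :
    Measurable fun ω => resid x (s ω) j := by
  induction j with
  | zero => exact measurable_const
  | succ j ih => exact ((measurable_const.max ih).add (hs j)).sub measurable_const

lemma zetaPrice_eq_mul_measureReal_hitEvent [MeasurableSpace Ω] (P : Measure Ω)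
    [IsFiniteMeasure P] (hs : ∀ j, Measurable fun ω => s ω j) (c0 : ℝ) (htN : t ≤ N) :
    zetaPrice N P s c0 x t = c0 * P.real (hitEvent (fun ω => resid x (s ω)) t N) := by
  have hfirst : {ω | resid x (s ω) t ≤ 0} = firstHitEvent (fun ω => resid x (s ω)) t t := by
    ext ω
    simp +contextual [firstHitEvent]
  rw [measureReal_hitEvent P (measurable_resid hs), ← Finset.add_sum_Ioc_eq_sum_Icc htN,
    ← Finset.Icc_add_one_left_eq_Ioc, zetaPrice, hfirst]
  rfl

lemma le_sub_indicator_hitEvent_of_forall_etaEvent (hkN : k ≤ N) {a : ℕ → ℝ}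
    (ha : ∀ t ∈ Finset.Icc k N, 0 ≤ a t) {c0 R q : ℝ} (hc0 : 0 ≤ c0) (hR : c0 ≤ R) {w u : ℝ}
    (hu : u ≤ R * min q w)
    (hw : ∀ t ∈ Finset.Icc k N, ω ∈ etaEvent N x s k t → w ≤ ∑ τ ∈ Finset.Icc k t, a τ) :
    u - ∑ t ∈ Finset.Icc k N,
        (hitEvent (fun ω => resid x (s ω)) t N).indicator (fun _ => c0 * a t) ω ≤
      R * q - (hitEvent (fun ω => resid x (s ω)) k N).indicator (fun _ => c0 * q) ω := by
  obtain ⟨t, ht, hη⟩ := exists_mem_etaEvent hkN ω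
  by_cases hE : ω ∈ hitEvent (fun ω => resid x (s ω)) k N
  · have hpay := sum_le_sum_indicator_hitEvent (b := fun τ => c0 * a τ)
      (fun τ hτ => mul_nonneg hc0 (ha τ hτ)) (Finset.mem_Icc.mp ht).2 hη hE
    rw [← Finset.mul_sum] at hpay
    rw [Set.indicator_of_mem hE]
    linarith [sub_mul_le_of_le_mul_min hu (hw t ht hη) hc0 hR]
  · have hpay : 0 ≤ ∑ t ∈ Finset.Icc k N,
        (hitEvent (fun ω => resid x (s ω)) t N).indicator (fun _ => c0 * a t) ω :=
      Finset.sum_nonneg fun τ hτ => Set.indicator_nonneg (fun _ _ => mul_nonneg hc0 (ha τ hτ)) ω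
    have hcap : R * min q w ≤ R * q := mul_le_mul_of_nonneg_left (min_le_left q w) (hc0.trans hR)
    rw [Set.indicator_of_notMem hE]
    linarith

end Residual

section Integral

variable [MeasurableSpace Ω] {μ : Measure Ω} [IsFiniteMeasure μ] {E : ℕ → Set Ω}

lemma integral_sub_sum_indicator_le_of_ae_le {f g : Ω → ℝ} (hf : Integrable f μ)
    (hg : Integrable g μ) (hE : ∀ t, MeasurableSet (E t)) {b c : ℕ → ℝ} {I J : Finset ℕ}
    (hfg : ∀ᵐ ω ∂μ, f ω - ∑ t ∈ I, (E t).indicator (fun _ => b t) ω ≤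
      g ω - ∑ t ∈ J, (E t).indicator (fun _ => c t) ω) :
    ∫ ω, f ω ∂μ - ∑ t ∈ I, μ.real (E t) * b t ≤ ∫ ω, g ω ∂μ - ∑ t ∈ J, μ.real (E t) * c t := by
  have hterm : ∀ (d : ℕ → ℝ) t, Integrable ((E t).indicator fun _ => d t) μ := fun d t =>
    (integrable_const (d t)).indicator (hE t)
  have hind : ∀ (d : ℕ → ℝ) (K : Finset ℕ),
      Integrable (fun ω => ∑ t ∈ K, (E t).indicator (fun _ => d t) ω) μ := fun d K =>
    integrable_finsetSum K fun t _ => hterm d t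
  have hmono := integral_mono_ae (hf.sub (hind b I)) (hg.sub (hind c J)) hfg
  simp only [Pi.sub_apply] at hmono
  rw [integral_sub hf (hind b I), integral_sub hg (hind c J),
    integral_finsetSum I fun t _ => hterm b t, integral_finsetSum J fun t _ => hterm c t] at hmono
  simpa only [integral_indicator_const _ (hE _), smul_eq_mul] using hmono

end Integral

end

theorem incentive_compatibility_payoff_comparison_general
    (N : ℕ)
    {Ω : Type*} [MeasurableSpace Ω] (P : Measure Ω) [IsProbabilityMeasure P]
    (s : Ω → ℕ → ℝ) (hmeas : Measurable s)
    (x : ℕ → ℝ)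
    (k : ℕ) (hkN : k ≤ N)
    (c0 q R : ℝ) (hc0 : 0 < c0) (hq : 0 < q)
    (U : ℝ → ℝ) (hUmeas : Measurable U)
    (hUnonneg : ∀ y, 0 ≤ y → 0 ≤ U y)
    (hUlin : ∀ y ∈ Set.Icc (0 : ℝ) q, U y ≤ R * y)
    (hUsat : ∀ y, q ≤ y → U y = U q)
    (hRq : R = U q / q) (hR : c0 ≤ R)
    (a : ℕ → ℝ) (ha : ∀ t ∈ Finset.Icc k N, 0 ≤ a t)
    (W : Ω → ℝ) (hWmeas : Measurable W)
    (hWnonneg : ∀ ω, 0 ≤ W ω)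
    (hWle : ∀ t ∈ Finset.Icc k N, ∀ᵐ ω ∂P,
      ω ∈ etaEvent N x s k t → W ω ≤ ∑ τ ∈ Finset.Icc k t, a τ) :
    (∫ ω, U (W ω) ∂P) - ∑ t ∈ Finset.Icc k N, zetaPrice N P s c0 x t * a t ≤
      U q - q * zetaPrice N P s c0 x k := by
  have hUq : U q = R * q := by rw [hRq, div_mul_cancel₀ _ hq.ne']
  have hsj : ∀ j, Measurable fun ω => s ω j := measurable_pi_iff.mp hmeas
  set E : ℕ → Set Ω := fun t => hitEvent (fun ω => resid x (s ω)) t N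
  have hE : ∀ t, MeasurableSet (E t) := fun t => measurableSet_hitEvent (measurable_resid hsj) t N
  have hζ : ∀ t ≤ N, zetaPrice N P s c0 x t = c0 * P.real (E t) := fun t htN =>
    zetaPrice_eq_mul_measureReal_hitEvent P hsj c0 htN
  have hUW : Integrable (fun ω => U (W ω)) P :=
    .of_bound (hUmeas.comp hWmeas).aestronglyMeasurable (U q) (ae_of_all _ fun ω => by
      rw [Real.norm_of_nonneg (hUnonneg _ (hWnonneg ω))]
      exact apply_le_apply_saturation hUlin hUsat hUq (hc0.le.trans hR) (hWnonneg ω))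
  have hpt : ∀ᵐ ω ∂P, U (W ω) - ∑ t ∈ Finset.Icc k N, (E t).indicator (fun _ => c0 * a t) ω ≤
      U q - ∑ t ∈ {k}, (E t).indicator (fun _ => c0 * q) ω := by
    filter_upwards [(Filter.eventually_all_finset _).mpr hWle] with ω hω
    rw [Finset.sum_singleton, hUq]
    exact le_sub_indicator_hitEvent_of_forall_etaEvent hkN ha hc0.le hR
      (apply_le_mul_min hUlin hUsat hUq (hWnonneg ω)) hω
  calc (∫ ω, U (W ω) ∂P) - ∑ t ∈ Finset.Icc k N, zetaPrice N P s c0 x t * a t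
      = (∫ ω, U (W ω) ∂P) - ∑ t ∈ Finset.Icc k N, P.real (E t) * (c0 * a t) := by
        refine congrArg _ (Finset.sum_congr rfl fun t ht => ?_)
        rw [hζ t (Finset.mem_Icc.mp ht).2]
        ring
    _ ≤ (∫ _, U q ∂P) - ∑ t ∈ {k}, P.real (E t) * (c0 * q) :=
        integral_sub_sum_indicator_le_of_ae_le hUW (integrable_const _) hE hpt
    _ = U q - q * zetaPrice N P s c0 x k := by
        rw [integral_const, probReal_univ, one_smul, Finset.sum_singleton, hζ k hkN]
        ring

/-- Incentive compatibility payoff comparison (core of Theorem 3):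
under the utility assumptions with `R = U(q)/q ≥ c_0 > 0`, for any deviation
requesting `a_k, …, a_N ≥ 0` whose random delivery `W` by the true deadline `k`
satisfies `W ≤ Σ_{τ=k}^t a_τ` a.s. on `η_t` for every `t ∈ {k,…,N}`, the expected
surplus from the deviation is no larger than the truth-telling surplus:
`E[U(W)] − Σ_{t=k}^N ζ_t(x)·a_t ≤ U(q) − q·ζ_k(x)`. -/
theorem incentive_compatibility_payoff_comparison
    (N : ℕ) (hN : 1 ≤ N)
    {Ω : Type*} [MeasurableSpace Ω] (P : Measure Ω) [IsProbabilityMeasure P]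
    (s : Ω → ℕ → ℝ) (hmeas : Measurable s)
    (hs : ∀ ω, ∀ j, j < N → 0 ≤ s ω j)
    (x : ℕ → ℝ) (hx : ∀ j, 1 ≤ j → j ≤ N → 0 ≤ x j)
    (k : ℕ) (hk : 1 ≤ k) (hkN : k ≤ N)
    (c0 q R : ℝ) (hc0 : 0 < c0) (hq : 0 < q)
    (U : ℝ → ℝ) (hUmeas : Measurable U)
    (hUnonneg : ∀ y, 0 ≤ y → 0 ≤ U y)
    (hUmono : MonotoneOn U (Set.Icc 0 q))
    (hUlin : ∀ y ∈ Set.Icc (0 : ℝ) q, U y ≤ R * y)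
    (hUsat : ∀ y, q ≤ y → U y = U q)
    (hRq : R = U q / q) (hR : c0 ≤ R)
    (a : ℕ → ℝ) (ha : ∀ t ∈ Finset.Icc k N, 0 ≤ a t)
    (W : Ω → ℝ) (hWmeas : Measurable W)
    (hWnonneg : ∀ ω, 0 ≤ W ω) (C : ℝ) (hWbdd : ∀ ω, W ω ≤ C)
    (hWle : ∀ t ∈ Finset.Icc k N, ∀ᵐ ω ∂P,
      ω ∈ etaEvent N x s k t → W ω ≤ ∑ τ ∈ Finset.Icc k t, a τ) :
    (∫ ω, U (W ω) ∂P) - ∑ t ∈ Finset.Icc k N, zetaPrice N P s c0 x t * a t ≤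
      U q - q * zetaPrice N P s c0 x k :=
  incentive_compatibility_payoff_comparison_general N P s hmeas x k hkN c0 q R hc0 hq U hUmeas
    hUnonneg hUlin hUsat hRq hR a ha W hWmeas hWnonneg hWle
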